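/- arXiv:2311.13676 — 2 statements merged into one kernel-verified Lean document; each statement's English description precedes it below -/
import Mathlib

section
/- Let T₁ < T₂, let k ≥ 0, let s = (s₁,…,s_k) be a spike train with T₁ < s₁ < ⋯ < s_k < T₂ (with s₀ = T₁, s_{k+1} = T₂), and let Λ : [T₁,T₂] → ℝ be strictly increasing with Λ(T₁) = 0 and Λ(T₂) > 0. Then the conditional ILR depth satisfies 0 < D_ILR(s∣k) ≤ 1, and D_ILR(s∣k) = 1 if and only if Λ(s_i) − Λ(s_{i−1}) = Λ(T₂)/(k+1) for every i = 1,…,k+1. -/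
/-!
With `t i = (k+1)/Λ(T₂) · (Λ(s (i+1)) - Λ(s i))`, the argument of the logarithm is `∏ t i`, and the
`t i` are positive with `∑ t i = k + 1` because the increments of `Λ` telescope to `Λ(T₂)`.
Summing `log t ≤ t - 1` gives `log ∏ t i ≤ 0`, so the depth `1 / (1 - log ∏ t i)` lies in `(0, 1]`;
as `log t = t - 1` only at `t = 1`, the depth is `1` exactly when every `t i` is `1`.
-/

open Finset

namespace Real

variable {ι : Type*} {s : Finset ι} {t : ι → ℝ}

theorem sum_log_le_zero_of_sum_eq_card (ht : ∀ i ∈ s, 0 < t i) (hsum : ∑ i ∈ s, t i = #s) :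
    ∑ i ∈ s, log (t i) ≤ 0 :=
  calc ∑ i ∈ s, log (t i) ≤ ∑ i ∈ s, (t i - 1) :=
        sum_le_sum fun i hi => log_le_sub_one_of_pos (ht i hi)
    _ = 0 := by simp [sum_sub_distrib, hsum]

theorem sum_log_eq_zero_iff_of_sum_eq_card (ht : ∀ i ∈ s, 0 < t i)
    (hsum : ∑ i ∈ s, t i = #s) : ∑ i ∈ s, log (t i) = 0 ↔ ∀ i ∈ s, t i = 1 := by
  have hgap : ∑ i ∈ s, (t i - 1 - log (t i)) = -∑ i ∈ s, log (t i) := by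
    simp [sum_sub_distrib, hsum]
  have hgap_nonneg : ∀ i ∈ s, 0 ≤ t i - 1 - log (t i) := fun i hi => by
    linarith [log_le_sub_one_of_pos (ht i hi)]
  rw [← neg_eq_zero, ← hgap, sum_eq_zero_iff_of_nonneg hgap_nonneg]
  refine forall₂_congr fun i hi => ⟨fun h => ?_, fun h => by simp [h]⟩
  by_contra hne
  linarith [log_lt_sub_one_of_pos (ht i hi) hne]

variable {d : ι → ℝ}

private theorem card_pow_div_sum_pow_mul_prod (hs : s.Nonempty) (hd : ∀ i ∈ s, 0 < d i) :
    (#s : ℝ) ^ #s / (∑ j ∈ s, d j) ^ #s * ∏ i ∈ s, d i = ∏ i ∈ s, (#s / ∑ j ∈ s, d j) * d i ∧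
      (∀ i ∈ s, 0 < (#s / ∑ j ∈ s, d j) * d i) ∧
      ∑ i ∈ s, (#s / ∑ j ∈ s, d j) * d i = #s := by
  have hS : 0 < ∑ j ∈ s, d j := sum_pos hd hs
  have hcard : (0 : ℝ) < #s := by exact_mod_cast hs.card_pos
  refine ⟨?_, fun i hi => by have := hd i hi; positivity, ?_⟩
  · rw [prod_mul_distrib, prod_const, div_pow]
  · rw [← mul_sum, div_mul_cancel₀ _ hS.ne']

theorem log_card_pow_div_sum_pow_mul_prod_nonpos (hs : s.Nonempty) (hd : ∀ i ∈ s, 0 < d i) :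
    log ((#s : ℝ) ^ #s / (∑ j ∈ s, d j) ^ #s * ∏ i ∈ s, d i) ≤ 0 := by
  obtain ⟨hprod, hpos, hsum⟩ := card_pow_div_sum_pow_mul_prod hs hd
  rw [hprod, log_prod fun i hi => (hpos i hi).ne']
  exact sum_log_le_zero_of_sum_eq_card hpos hsum

theorem log_card_pow_div_sum_pow_mul_prod_eq_zero_iff (hs : s.Nonempty) (hd : ∀ i ∈ s, 0 < d i) :
    log ((#s : ℝ) ^ #s / (∑ j ∈ s, d j) ^ #s * ∏ i ∈ s, d i) = 0 ↔
      ∀ i ∈ s, d i = (∑ j ∈ s, d j) / #s := by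
  obtain ⟨hprod, hpos, hsum⟩ := card_pow_div_sum_pow_mul_prod hs hd
  have hS : 0 < ∑ j ∈ s, d j := sum_pos hd hs
  have hcard : (0 : ℝ) < #s := by exact_mod_cast hs.card_pos
  rw [hprod, log_prod fun i hi => (hpos i hi).ne', sum_log_eq_zero_iff_of_sum_eq_card hpos hsum]
  refine forall₂_congr fun i _ => ?_
  rw [div_mul_eq_mul_div, div_eq_one_iff_eq hS.ne', eq_div_iff hcard.ne', mul_comm]

end Real

theorem ilr_depth_range_general (T₁ T₂ : ℝ) (k : ℕ) (s : ℕ → ℝ)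
    (hs0 : s 0 = T₁) (hsk : s (k + 1) = T₂)
    (hmono : ∀ i < k + 1, s i < s (i + 1))
    (Λ : ℝ → ℝ) (hΛ : StrictMonoOn Λ (Set.Icc T₁ T₂))
    (hΛ0 : Λ T₁ = 0) :
    0 < 1 / (1 - Real.log (((k : ℝ) + 1) ^ (k + 1) / (Λ T₂) ^ (k + 1) *
        ∏ i ∈ Finset.range (k + 1), (Λ (s (i + 1)) - Λ (s i)))) ∧
    1 / (1 - Real.log (((k : ℝ) + 1) ^ (k + 1) / (Λ T₂) ^ (k + 1) *
        ∏ i ∈ Finset.range (k + 1), (Λ (s (i + 1)) - Λ (s i)))) ≤ 1 ∧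
    (1 / (1 - Real.log (((k : ℝ) + 1) ^ (k + 1) / (Λ T₂) ^ (k + 1) *
        ∏ i ∈ Finset.range (k + 1), (Λ (s (i + 1)) - Λ (s i)))) = 1 ↔
      ∀ i < k + 1, Λ (s (i + 1)) - Λ (s i) = Λ T₂ / ((k : ℝ) + 1)) := by
  have hs_mono : MonotoneOn s (Set.Iic (k + 1)) :=
    (strictMonoOn_Iic_of_lt_succ fun m hm => by simpa using hmono m hm).monotoneOn
  have hmem : ∀ i ≤ k + 1, s i ∈ Set.Icc T₁ T₂ := fun i hi => by
    rw [← hs0, ← hsk]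
    exact ⟨hs_mono (by simp) hi (Nat.zero_le i), hs_mono hi (Set.mem_Iic.2 le_rfl) hi⟩
  have hinc : ∀ i ∈ range (k + 1), 0 < Λ (s (i + 1)) - Λ (s i) := fun i hi => by
    rw [mem_range] at hi
    exact sub_pos.2 (hΛ (hmem i hi.le) (hmem (i + 1) hi) (hmono i hi))
  have htotal : ∑ i ∈ range (k + 1), (Λ (s (i + 1)) - Λ (s i)) = Λ T₂ := by
    rw [sum_range_sub (fun i => Λ (s i)), hsk, hs0, hΛ0, sub_zero]
  have hnonpos := Real.log_card_pow_div_sum_pow_mul_prod_nonpos nonempty_range_add_one hinc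
  have heq := Real.log_card_pow_div_sum_pow_mul_prod_eq_zero_iff nonempty_range_add_one hinc
  simp only [card_range, htotal, Nat.cast_add, Nat.cast_one, mem_range] at hnonpos heq
  rw [one_div, inv_eq_one, sub_eq_self, heq]
  exact ⟨inv_pos.2 (by linarith), inv_le_one_of_one_le₀ (by linarith), Iff.rfl⟩

/-- The conditional ILR depth of a spike train lies in `(0,1]`, with value `1` iff all
rescaled inter-spike intervals equal `Λ(T₂)/(k+1)`. -/
theorem ilr_depth_range (T₁ T₂ : ℝ) (hT : T₁ < T₂) (k : ℕ) (s : ℕ → ℝ)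
    (hs0 : s 0 = T₁) (hsk : s (k + 1) = T₂)
    (hmono : ∀ i < k + 1, s i < s (i + 1))
    (Λ : ℝ → ℝ) (hΛ : StrictMonoOn Λ (Set.Icc T₁ T₂))
    (hΛ0 : Λ T₁ = 0) (hΛpos : 0 < Λ T₂) :
    0 < 1 / (1 - Real.log (((k : ℝ) + 1) ^ (k + 1) / (Λ T₂) ^ (k + 1) *
        ∏ i ∈ Finset.range (k + 1), (Λ (s (i + 1)) - Λ (s i)))) ∧
    1 / (1 - Real.log (((k : ℝ) + 1) ^ (k + 1) / (Λ T₂) ^ (k + 1) *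
        ∏ i ∈ Finset.range (k + 1), (Λ (s (i + 1)) - Λ (s i)))) ≤ 1 ∧
    (1 / (1 - Real.log (((k : ℝ) + 1) ^ (k + 1) / (Λ T₂) ^ (k + 1) *
        ∏ i ∈ Finset.range (k + 1), (Λ (s (i + 1)) - Λ (s i)))) = 1 ↔
      ∀ i < k + 1, Λ (s (i + 1)) - Λ (s i) = Λ T₂ / ((k : ℝ) + 1)) :=
  ilr_depth_range_general T₁ T₂ k s hs0 hsk hmono Λ hΛ hΛ0
end

section
/- Let T₁ < T₂, r > 0, and let w : ℕ → (0,1] be a weight function with w(k*) = 1 for some k* ∈ ℕ. For a spike train s = (s₁,…,s_k) with T₁ < s₁ < ⋯ < s_k < T₂ (s₀ = T₁, s_{k+1} = T₂), define its homogeneous-Poisson ILR depth D(s) = w(k)^r / (1 − log((k+1)^{k+1}/(T₂−T₁)^{k+1} · ∏_{i=1}^{k+1}(s_i − s_{i−1}))). Then the evenly spaced spike train s* with cardinality k*, given by s*_i = T₁ + i(T₂−T₁)/(k*+1) for i = 1,…,k*, satisfies D(s*) = 1 ≥ D(s) for every spike train s of any cardinality; moreover, among spike trains of cardinality k*, s*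 is the unique maximizer of D when w attains the value 1 only at k*. -/
/-!
Write `gᵢ = sᵢ₊₁ - sᵢ` for the `k + 1` gaps of a spike train, so that `∑ gᵢ = T₂ - T₁`, and
normalise them to `xᵢ = (k + 1) gᵢ / (T₂ - T₁)`, which sum to `k + 1`. The argument of the
logarithm in the depth is `∏ xᵢ`, and `log x ≤ x - 1` (strict unless `x = 1`) gives
`∑ log xᵢ ≤ ∑ (xᵢ - 1) = 0`, with equality only when every gap equals `(T₂ - T₁) / (k + 1)`.
Hence the conditional depth is at most `1`, attained exactly at the evenly spaced train, and the
cardinality weight `w(k)ʳ ≤ 1` equals `1` at `k*`.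
-/

open Finset Real

theorem Real.sum_log_nonpos_of_sum_eq_card {ι : Type*} {s : Finset ι} {x : ι → ℝ}
    (hx : ∀ i ∈ s, 0 < x i) (hsum : ∑ i ∈ s, x i = #s) :
    ∑ i ∈ s, log (x i) ≤ 0 :=
  calc ∑ i ∈ s, log (x i) ≤ ∑ i ∈ s, (x i - 1) :=
        sum_le_sum fun i hi => log_le_sub_one_of_pos (hx i hi)
    _ = 0 := by simp [sum_sub_distrib, hsum]

theorem Real.sum_log_neg_of_sum_eq_card {ι : Type*} {s : Finset ι} {x : ι → ℝ}
    (hx : ∀ i ∈ s, 0 < x i) (hsum : ∑ i ∈ s, x i = #s) {j : ι} (hj : j ∈ s) (hxj : x j ≠ 1) :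
    ∑ i ∈ s, log (x i) < 0 :=
  calc ∑ i ∈ s, log (x i) < ∑ i ∈ s, (x i - 1) :=
        sum_lt_sum (fun i hi => log_le_sub_one_of_pos (hx i hi))
          ⟨j, hj, log_lt_sub_one_of_pos (hx j hj) hxj⟩
    _ = 0 := by simp [sum_sub_distrib, hsum]

theorem eq_add_nsmul_of_sub_eq {M : Type*} [AddCommGroup M] {s : ℕ → M} {d : M} {n : ℕ}
    (h : ∀ i < n, s (i + 1) - s i = d) : ∀ i ≤ n, s i = s 0 + i • d := by
  intro i hi
  induction i with
  | zero => simp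
  | succ i ih =>
    rw [← sub_add_cancel (s (i + 1)) (s i), h i hi, ih (Nat.le_of_succ_le hi), succ_nsmul]
    abel

noncomputable section

/-- The spike train `s₁ < ⋯ < s_k` in `(T₁, T₂)`, padded with `s₀ = T₁` and `s_{k+1} = T₂`. -/
def IsSpikeTrain (T₁ T₂ : ℝ) (k : ℕ) (s : ℕ → ℝ) : Prop :=
  s 0 = T₁ ∧ s (k + 1) = T₂ ∧ ∀ i < k + 1, s i < s (i + 1)

def evenlySpaced (T₁ T₂ : ℝ) (k : ℕ) (i : ℕ) : ℝ :=
  T₁ + (i : ℝ) * (T₂ - T₁) / ((k : ℝ) + 1)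

def normalizedGap (T₁ T₂ : ℝ) (k : ℕ) (s : ℕ → ℝ) (i : ℕ) : ℝ :=
  ((k : ℝ) + 1) * (s (i + 1) - s i) / (T₂ - T₁)

def spacingRatio (T₁ T₂ : ℝ) (k : ℕ) (s : ℕ → ℝ) : ℝ :=
  ((k : ℝ) + 1) ^ (k + 1) / (T₂ - T₁) ^ (k + 1) * ∏ i ∈ range (k + 1), (s (i + 1) - s i)

/-- The homogeneous-Poisson ILR depth `D(s)`; `spacingRatio` is the argument of its logarithm. -/
def hppDepth (T₁ T₂ r : ℝ) (w : ℕ → ℝ) (k : ℕ) (s : ℕ → ℝ) : ℝ :=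
  w k ^ r / (1 - log (spacingRatio T₁ T₂ k s))

end

section

variable {T₁ T₂ : ℝ} {k : ℕ} {s : ℕ → ℝ}

theorem spacingRatio_eq_prod_normalizedGap :
    spacingRatio T₁ T₂ k s = ∏ i ∈ range (k + 1), normalizedGap T₁ T₂ k s i := by
  simp only [spacingRatio, normalizedGap, mul_div_right_comm _ _ (T₂ - T₁), prod_mul_distrib,
    prod_const, card_range, div_pow]

theorem normalizedGap_evenlySpaced (hT : T₁ ≠ T₂) (i : ℕ) :
    normalizedGap T₁ T₂ k (evenlySpaced T₁ T₂ k) i = 1 := by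
  have hL : T₂ - T₁ ≠ 0 := sub_ne_zero.2 hT.symm
  simp only [normalizedGap, evenlySpaced]
  push_cast
  field_simp
  ring

theorem spacingRatio_evenlySpaced (hT : T₁ ≠ T₂) :
    spacingRatio T₁ T₂ k (evenlySpaced T₁ T₂ k) = 1 := by
  rw [spacingRatio_eq_prod_normalizedGap]
  exact prod_eq_one fun i _ => normalizedGap_evenlySpaced hT i

namespace IsSpikeTrain

theorem gap_pos (hs : IsSpikeTrain T₁ T₂ k s) {i : ℕ} (hi : i < k + 1) : 0 < s (i + 1) - s i :=
  sub_pos.2 (hs.2.2 i hi)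

theorem sum_gaps (hs : IsSpikeTrain T₁ T₂ k s) :
    ∑ i ∈ range (k + 1), (s (i + 1) - s i) = T₂ - T₁ := by
  rw [sum_range_sub, hs.1, hs.2.1]

theorem lt (hs : IsSpikeTrain T₁ T₂ k s) : T₁ < T₂ :=
  sub_pos.1 <| hs.sum_gaps ▸
    sum_pos (fun _ hi => hs.gap_pos (mem_range.1 hi)) nonempty_range_add_one

theorem normalizedGap_pos (hs : IsSpikeTrain T₁ T₂ k s) :
    ∀ i ∈ range (k + 1), 0 < normalizedGap T₁ T₂ k s i := fun _ hi =>
  div_pos (mul_pos (by positivity) (hs.gap_pos (mem_range.1 hi))) (sub_pos.2 hs.lt)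

theorem sum_normalizedGap (hs : IsSpikeTrain T₁ T₂ k s) :
    ∑ i ∈ range (k + 1), normalizedGap T₁ T₂ k s i = #(range (k + 1)) := by
  have hL : T₂ - T₁ ≠ 0 := (sub_pos.2 hs.lt).ne'
  simp only [normalizedGap, ← sum_div, ← mul_sum, hs.sum_gaps, card_range]
  push_cast
  field_simp

theorem log_spacingRatio (hs : IsSpikeTrain T₁ T₂ k s) :
    log (spacingRatio T₁ T₂ k s) = ∑ i ∈ range (k + 1), log (normalizedGap T₁ T₂ k s i) := by
  rw [spacingRatio_eq_prod_normalizedGap, log_prod fun i hi => (hs.normalizedGap_pos i hi).ne']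

theorem log_spacingRatio_nonpos (hs : IsSpikeTrain T₁ T₂ k s) :
    log (spacingRatio T₁ T₂ k s) ≤ 0 :=
  hs.log_spacingRatio ▸ sum_log_nonpos_of_sum_eq_card hs.normalizedGap_pos hs.sum_normalizedGap

theorem gap_eq_of_log_spacingRatio_eq_zero (hs : IsSpikeTrain T₁ T₂ k s)
    (h : log (spacingRatio T₁ T₂ k s) = 0) {i : ℕ} (hi : i < k + 1) :
    s (i + 1) - s i = (T₂ - T₁) / ((k : ℝ) + 1) := by
  have hgap : normalizedGap T₁ T₂ k s i = 1 := by
    by_contra hne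
    exact (sum_log_neg_of_sum_eq_card hs.normalizedGap_pos hs.sum_normalizedGap
      (mem_range.2 hi) hne).ne (hs.log_spacingRatio ▸ h)
  rw [normalizedGap, div_eq_one_iff_eq (sub_pos.2 hs.lt).ne'] at hgap
  field_simp
  linarith

theorem eq_evenlySpaced_of_log_spacingRatio_eq_zero (hs : IsSpikeTrain T₁ T₂ k s)
    (h : log (spacingRatio T₁ T₂ k s) = 0) : ∀ i ≤ k + 1, s i = evenlySpaced T₁ T₂ k i := by
  intro i hi
  rw [eq_add_nsmul_of_sub_eq (fun j hj => hs.gap_eq_of_log_spacingRatio_eq_zero h hj) i hi,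
    hs.1, evenlySpaced, nsmul_eq_mul, mul_div_assoc]

end IsSpikeTrain

variable {r : ℝ} {w : ℕ → ℝ}

theorem hppDepth_evenlySpaced (hT : T₁ ≠ T₂) (hw : w k = 1) :
    hppDepth T₁ T₂ r w k (evenlySpaced T₁ T₂ k) = 1 := by
  rw [hppDepth, spacingRatio_evenlySpaced hT, log_one, hw, one_rpow, sub_zero, div_one]

theorem IsSpikeTrain.hppDepth_le_one (hs : IsSpikeTrain T₁ T₂ k s) (hr : 0 ≤ r)
    (hw₀ : 0 ≤ w k) (hw₁ : w k ≤ 1) : hppDepth T₁ T₂ r w k s ≤ 1 := by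
  have hden : 1 ≤ 1 - log (spacingRatio T₁ T₂ k s) := by linarith [hs.log_spacingRatio_nonpos]
  exact div_le_one_of_le₀ ((rpow_le_one hw₀ hw₁ hr).trans hden) (by linarith)

theorem log_spacingRatio_eq_zero_of_hppDepth_eq_one (hw : w k ^ r = 1)
    (h : hppDepth T₁ T₂ r w k s = 1) : log (spacingRatio T₁ T₂ k s) = 0 := by
  rw [hppDepth, hw, one_div, inv_eq_one] at h
  linarith

end

/-- For the homogeneous-Poisson ILR depth with cardinality weight `w` satisfying
`w k* = 1`, the evenly spaced spike train `s*` of cardinality `k*` has depth `1`,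
every spike train of any cardinality has depth at most `1`, and, when `w` attains the
value `1` only at `k*`, among spike trains of cardinality `k*` the evenly spaced one is
the unique spike train of depth `1` (hence the unique maximizer). -/
theorem median_hpp_evenly_spaced (T₁ T₂ : ℝ) (hT : T₁ < T₂) (r : ℝ) (hr : 0 < r)
    (w : ℕ → ℝ) (hw : ∀ k, 0 < w k ∧ w k ≤ 1)
    (kstar : ℕ) (hwk : w kstar = 1) :
    (w kstar ^ r / (1 - Real.log (((kstar : ℝ) + 1) ^ (kstar + 1) / (T₂ - T₁) ^ (kstar + 1) *
        ∏ i ∈ Finset.range (kstar + 1),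
          ((T₁ + ((i : ℝ) + 1) * (T₂ - T₁) / ((kstar : ℝ) + 1)) -
            (T₁ + (i : ℝ) * (T₂ - T₁) / ((kstar : ℝ) + 1))))) = 1) ∧
    (∀ (k : ℕ) (s : ℕ → ℝ), s 0 = T₁ → s (k + 1) = T₂ → (∀ i < k + 1, s i < s (i + 1)) →
      w k ^ r / (1 - Real.log (((k : ℝ) + 1) ^ (k + 1) / (T₂ - T₁) ^ (k + 1) *
        ∏ i ∈ Finset.range (k + 1), (s (i + 1) - s i))) ≤ 1) ∧
    ((∀ k, w k = 1 → k = kstar) →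
      ∀ s : ℕ → ℝ, s 0 = T₁ → s (kstar + 1) = T₂ → (∀ i < kstar + 1, s i < s (i + 1)) →
        w kstar ^ r / (1 - Real.log (((kstar : ℝ) + 1) ^ (kstar + 1) / (T₂ - T₁) ^ (kstar + 1) *
          ∏ i ∈ Finset.range (kstar + 1), (s (i + 1) - s i))) = 1 →
        ∀ i ≤ kstar + 1, s i = T₁ + (i : ℝ) * (T₂ - T₁) / ((kstar : ℝ) + 1)) := by
  refine ⟨?_, fun k s h₀ h₁ hmono => ?_, fun _ s h₀ h₁ hmono hdepth => ?_⟩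
  · simpa only [hppDepth, spacingRatio, evenlySpaced, Nat.cast_succ] using
      hppDepth_evenlySpaced (r := r) hT.ne hwk
  · exact IsSpikeTrain.hppDepth_le_one ⟨h₀, h₁, hmono⟩ hr.le (hw k).1.le (hw k).2
  · have hlog := log_spacingRatio_eq_zero_of_hppDepth_eq_one (by rw [hwk, one_rpow]) hdepth
    exact IsSpikeTrain.eq_evenlySpaced_of_log_spacingRatio_eq_zero ⟨h₀, h₁, hmono⟩ hlog
end
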